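/- Let P = t^{-4} − 2t^{-3} + 3t^{-2} − 4t^{-1} + 4 − 4t + 3t^2 − 2t^3 + t^4 in ℤ[t, t^{-1}], and for an integer n set V_n = (−t)^n · P + 1 ∈ ℤ[t, t^{-1}]. Then the breadth of V_n (the maximal exponent of t occurring with nonzero coefficient in V_n minus the minimal such exponent) equals |n| + 4 if |n| > 4, and equals 8 if |n| ≤ 4. -/

import Mathlib

/-!
`V n = ±tⁿ P + 1`, and `P` has nonzero coefficients exactly at the exponents `-4, …, 4`, so the
support of `V n` is `{0} ∪ [n - 4, n + 4]`: the `1` cannot cancel the constant term `±P₋ₙ`,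
because the only coefficients `±1` of `P` are `+1`, at the even exponents `±4`, where the sign
`(-1)ⁿ` is `+1`. The breadth is therefore `max 0 (n + 4) - min 0 (n - 4)`.
-/

open LaurentPolynomial in
/-- The Laurent polynomial `P = t⁻⁴ - 2t⁻³ + 3t⁻² - 4t⁻¹ + 4 - 4t + 3t² - 2t³ + t⁴`. -/
noncomputable def kanenobuP : LaurentPolynomial ℤ :=
  T (-4) - 2 * T (-3) + 3 * T (-2) - 4 * T (-1) + 4 - 4 * T 1 + 3 * T 2 - 2 * T 3 + T 4

/-- The Laurent polynomial `V n = (-t)^n * P + 1`, the Jones polynomial of the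
Kanenobu knot `K(p,q)` with `n = p + q`. -/
noncomputable def kanenobuV (n : ℤ) : LaurentPolynomial ℤ :=
  ((n.negOnePow : ℤˣ) : ℤ) • (LaurentPolynomial.T n * kanenobuP) + 1

open LaurentPolynomial Finset

namespace LaurentPolynomial

variable {R : Type*} [Semiring R]

theorem coeff_ofNat_mul (k : ℕ) [k.AtLeastTwo] (f : R[T;T⁻¹]) (m : ℤ) :
    ((no_index (OfNat.ofNat k) : R[T;T⁻¹]) * f).coeff m = OfNat.ofNat k * f.coeff m := by
  rw [← map_ofNat C, ← single_eq_C, AddMonoidAlgebra.coeff_single_mul_apply, neg_zero, zero_add]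

theorem coeff_T_mul (n m : ℤ) (f : R[T;T⁻¹]) : (T n * f).coeff m = f.coeff (m - n) := by
  rw [T, AddMonoidAlgebra.coeff_single_mul_apply, one_mul, neg_add_eq_sub]

end LaurentPolynomial

namespace Finset

variable {α : Type*} [LinearOrder α] [LocallyFiniteOrder α]

theorem max'_insert_Icc (c : α) {a b : α} (hab : a ≤ b) :
    (insert c (Icc a b)).max' (insert_nonempty _ _) = max c b := by
  rw [max'_insert c _ (nonempty_Icc.mpr hab),
    (isGreatest_max' _ _).unique (by rw [coe_Icc]; exact isGreatest_Icc hab)]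

theorem min'_insert_Icc (c : α) {a b : α} (hab : a ≤ b) :
    (insert c (Icc a b)).min' (insert_nonempty _ _) = min c a := by
  rw [min'_insert c _ (nonempty_Icc.mpr hab),
    (isLeast_min' _ _).unique (by rw [coe_Icc]; exact isLeast_Icc hab)]

end Finset

theorem kanenobuP_coeff (m : ℤ) : kanenobuP.coeff m =
    (if m = -4 then 1 else 0) - (if m = -3 then 2 else 0) + (if m = -2 then 3 else 0)
      - (if m = -1 then 4 else 0) + (if m = 0 then 4 else 0) - (if m = 1 then 4 else 0)
      + (if m = 2 then 3 else 0) - (if m = 3 then 2 else 0) + (if m = 4 then 1 else 0) := by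
  simp [kanenobuP, coeff_ofNat_mul, Finsupp.single_apply, eq_comm]

theorem kanenobuP_coeff_ne_zero_iff (m : ℤ) : kanenobuP.coeff m ≠ 0 ↔ |m| ≤ 4 := by
  rw [kanenobuP_coeff, abs_le]
  split_ifs <;> omega

theorem kanenobuP_coeff_ne_neg_one (m : ℤ) : kanenobuP.coeff m ≠ -1 := by
  rw [kanenobuP_coeff]
  split_ifs <;> omega

theorem even_of_kanenobuP_coeff_eq_one {m : ℤ} (h : kanenobuP.coeff m = 1) : Even m := by
  rw [kanenobuP_coeff] at h
  rw [Int.even_iff]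
  split_ifs at h <;> omega

theorem kanenobuV_coeff (n k : ℤ) :
    (kanenobuV n).coeff k = n.negOnePow * kanenobuP.coeff (k - n) + if k = 0 then 1 else 0 := by
  rw [kanenobuV, AddMonoidAlgebra.coeff_add, Finsupp.add_apply, AddMonoidAlgebra.coeff_smul,
    Finsupp.smul_apply, coeff_T_mul, smul_eq_mul, AddMonoidAlgebra.one_def,
    AddMonoidAlgebra.coeff_single, Finsupp.single_apply]
  simp only [@eq_comm _ 0 k]

theorem kanenobuV_coeff_zero_ne_zero (n : ℤ) : (kanenobuV n).coeff 0 ≠ 0 := by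
  rw [kanenobuV_coeff, if_pos rfl, zero_sub]
  rcases Int.even_or_odd n with hn | hn
  · rw [Int.negOnePow_even n hn, Units.val_one, one_mul]
    exact fun h ↦ kanenobuP_coeff_ne_neg_one (-n) (eq_neg_of_add_eq_zero_left h)
  · rw [Int.negOnePow_odd n hn, Units.val_neg, Units.val_one, neg_one_mul]
    exact fun h ↦ Int.not_even_iff_odd.mpr hn.neg (even_of_kanenobuP_coeff_eq_one (by linarith))

theorem support_kanenobuV (n : ℤ) :
    (kanenobuV n).coeff.support = insert 0 (Icc (n - 4) (n + 4)) := by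
  ext k
  rw [Finsupp.mem_support_iff, mem_insert, mem_Icc]
  by_cases hk : k = 0
  · subst hk
    simpa using kanenobuV_coeff_zero_ne_zero n
  · rw [kanenobuV_coeff, if_neg hk, add_zero, Ne, Units.mul_right_eq_zero, ← Ne,
      kanenobuP_coeff_ne_zero_iff, abs_le]
    omega

/-- The breadth of `V n` (maximal exponent of `t` with nonzero coefficient minus the
minimal such exponent) is `|n| + 4` if `|n| > 4` and `8` if `|n| ≤ 4`. -/
theorem kanenobu_jones_breadth (n : ℤ) :
    ∃ h : (kanenobuV n).coeff.support.Nonempty,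
      (kanenobuV n).coeff.support.max' h - (kanenobuV n).coeff.support.min' h =
        if 4 < |n| then |n| + 4 else 8 := by
  have hne : (kanenobuV n).coeff.support.Nonempty := ⟨0, by simp [support_kanenobuV]⟩
  refine ⟨hne, ?_⟩
  have hn : n - 4 ≤ n + 4 := by omega
  simp only [support_kanenobuV, max'_insert_Icc 0 hn, min'_insert_Icc 0 hn]
  grind
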